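/- arXiv:2511.10812 — 4 statements merged into one kernel-verified Lean document; each statement's English description precedes it below -/
import Mathlib

section
/- For n ≥ 2, the number of non-adjacent subsets of Z/nZ is the nearest integer to φ^n, where φ = (1+√5)/2 is the golden ratio; equivalently, |s_n − φ^n| < 1/2 for n ≥ 2. -/
/-- A subset `A` of `ZMod n` is non-adjacent if whenever `i ∈ A`,
neither `i + 1` nor `i - 1` (mod `n`) belongs to `A`. -/
def NonAdjacent {n : ℕ} (A : Finset (ZMod n)) : Prop :=
  ∀ i ∈ A, (i + 1) ∉ A ∧ (i - 1) ∉ A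

/-- `s n` is the number of non-adjacent subsets of `ZMod n`. -/
noncomputable def numNonAdjacent (n : ℕ) : ℕ :=
  Nat.card {A : Finset (ZMod n) // NonAdjacent A}

/-!
Reading the indicator of `A ⊆ ℤ/nℤ` around the cycle identifies non-adjacent subsets with
cyclic binary words of length `n` having no two consecutive `true`s. The sparse words of
length `m` framed by prescribed letters `a` and `b` are counted by the entries of
`!![1, 1; 1, 0] ^ (m + 1)`, which are Fibonacci numbers; summing over `a = b` gives
`s (m + 1) = F (m + 2) + F m = φ ^ (m + 1) + ψ ^ (m + 1)`, and `|ψ ^ n| ≤ ψ ^ 2 < 1 / 2`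
for `n ≥ 2`.
-/

open List Finset Real goldenRatio

def IsSparse (l : List Bool) : Prop := l.IsChain fun a b : Bool => ¬(a ∧ b)

def consUnion (s t : Finset (List Bool)) : Finset (List Bool) :=
  s.image (cons false) ∪ t.image (cons true)

lemma nil_notMem_consUnion (s t : Finset (List Bool)) : [] ∉ consUnion s t := by
  simp [consUnion]

lemma cons_mem_consUnion {s t : Finset (List Bool)} {c : Bool} {l : List Bool} :
    c :: l ∈ consUnion s t ↔ l ∈ cond c t s := by
  cases c <;> simp [consUnion]

lemma card_consUnion (s t : Finset (List Bool)) : #(consUnion s t) = #s + #t := by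
  rw [consUnion, card_union_of_disjoint, card_image_of_injective _ cons_injective,
    card_image_of_injective _ cons_injective]
  simp [Finset.disjoint_left]

def sparseWords : Bool → Bool → ℕ → Finset (List Bool)
  | a, b, 0 => if a ∧ b then ∅ else {[]}
  | a, b, m + 1 => consUnion (sparseWords false b m) (if a then ∅ else sparseWords true b m)

lemma mem_sparseWords {a b : Bool} {m : ℕ} {l : List Bool} :
    l ∈ sparseWords a b m ↔ l.length = m ∧ IsSparse (a :: l ++ [b]) := by
  induction m generalizing a l with
  | zero =>
    cases l with
    | nil => cases a <;> cases b <;> simp [sparseWords, IsSparse]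
    | cons c l => simp only [sparseWords]; split_ifs <;> simp
  | succ m ih =>
    cases l with
    | nil => simp [sparseWords, nil_notMem_consUnion]
    | cons c l => cases a <;> cases c <;> simp [sparseWords, cons_mem_consUnion, ih, IsSparse]

lemma card_sparseWords (a b : Bool) (m : ℕ) :
    #(sparseWords a b m) = Nat.fib (m + (!a).toNat + (!b).toNat) := by
  induction m generalizing a with
  | zero => cases a <;> cases b <;> rfl
  | succ m ih =>
    cases a
    · rw [sparseWords, card_consUnion, if_neg Bool.false_ne_true, ih, ih]
      simp only [Bool.not_false, Bool.not_true, Bool.toNat_true, Bool.toNat_false, add_zero]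
      rw [add_right_comm m 1, add_right_comm (m + 1) 1, add_right_comm m 1, Nat.fib_add_two,
        add_comm]
    · simp [sparseWords, card_consUnion, ih]

def cyclicSparseWords (m : ℕ) : Finset (List Bool) :=
  consUnion (sparseWords false false m) (sparseWords true true m)

lemma mem_cyclicSparseWords {m : ℕ} {l : List Bool} :
    l ∈ cyclicSparseWords m ↔ l.length = m + 1 ∧ IsSparse (l ++ l.take 1) := by
  cases l with
  | nil => simp [cyclicSparseWords, nil_notMem_consUnion]
  | cons c l => cases c <;> simp [cyclicSparseWords, cons_mem_consUnion, mem_sparseWords]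

lemma card_cyclicSparseWords (m : ℕ) : #(cyclicSparseWords m) = Nat.fib (m + 2) + Nat.fib m := by
  simp [cyclicSparseWords, card_consUnion, card_sparseWords]

lemma nonAdjacent_iff_forall_add_one_notMem {n : ℕ} {A : Finset (ZMod n)} :
    NonAdjacent A ↔ ∀ x ∈ A, x + 1 ∉ A :=
  ⟨fun h x hx => (h x hx).1, fun h x hx =>
    ⟨h x hx, fun hx' => h (x - 1) hx' (by rwa [sub_add_cancel])⟩⟩

def indicatorWord {n : ℕ} (A : Finset (ZMod n)) : List Bool :=
  ofFn fun i : Fin n => decide (((i : ℕ) : ZMod n) ∈ A)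

lemma length_indicatorWord {n : ℕ} (A : Finset (ZMod n)) : (indicatorWord A).length = n :=
  length_ofFn

section indicatorWord

variable {n : ℕ} [NeZero n]

lemma indicatorWord_append_take_one (A : Finset (ZMod n)) :
    indicatorWord A ++ (indicatorWord A).take 1 =
      ofFn fun i : Fin (n + 1) => decide (((i : ℕ) : ZMod n) ∈ A) := by
  obtain ⟨m, rfl⟩ := Nat.exists_eq_succ_of_ne_zero (NeZero.ne n)
  rw [ofFn_succ', indicatorWord, ofFn_succ]
  simp

lemma nonAdjacent_iff_isSparse (A : Finset (ZMod n)) :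
    NonAdjacent A ↔ IsSparse (indicatorWord A ++ (indicatorWord A).take 1) := by
  rw [indicatorWord_append_take_one, IsSparse, isChain_ofFn,
    nonAdjacent_iff_forall_add_one_notMem]
  refine ⟨fun h i _ => by simpa using h i, fun h x => ?_⟩
  simpa using h x.val (by simpa using x.val_lt)

lemma indicatorWord_injective : Function.Injective (indicatorWord (n := n)) := by
  intro A B h
  have h := funext_iff.mp (ofFn_injective h)
  ext x
  simpa only [ZMod.natCast_val, ZMod.cast_id', id, decide_eq_decide] using h ⟨x.val, x.val_lt⟩

lemma exists_indicatorWord_eq {l : List Bool} (hl : l.length = n) :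
    ∃ A : Finset (ZMod n), indicatorWord A = l := by
  refine ⟨univ.filter fun x : ZMod n => l.getD x.val false,
    ext_getElem (by simp [length_indicatorWord, hl]) fun i _ hi => ?_⟩
  simp [indicatorWord, Nat.mod_eq_of_lt (hl ▸ hi), hi]

end indicatorWord

theorem numNonAdjacent_succ (m : ℕ) : numNonAdjacent (m + 1) = Nat.fib (m + 2) + Nat.fib m := by
  classical
  rw [numNonAdjacent, Nat.card_eq_fintype_card, Fintype.card_subtype, ← card_cyclicSparseWords]
  refine card_bij (fun A _ => indicatorWord A) (fun A hA => ?_)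
    (fun A _ B _ h => indicatorWord_injective h) (fun l hl => ?_)
  · rw [mem_cyclicSparseWords, length_indicatorWord, ← nonAdjacent_iff_isSparse]
    exact ⟨rfl, (Finset.mem_filter.mp hA).2⟩
  · obtain ⟨hlen, hl⟩ := mem_cyclicSparseWords.mp hl
    obtain ⟨A, rfl⟩ := exists_indicatorWord_eq hlen
    exact ⟨A, Finset.mem_filter.mpr ⟨mem_univ A, (nonAdjacent_iff_isSparse A).mpr hl⟩, rfl⟩

lemma fib_add_two_add_fib (m : ℕ) :
    ((Nat.fib (m + 2) + Nat.fib m : ℕ) : ℝ) = φ ^ (m + 1) + ψ ^ (m + 1) := by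
  rw [← goldenRatio_mul_fib_succ_add_fib, ← goldenConj_mul_fib_succ_add_fib, Nat.fib_add_two]
  push_cast
  linear_combination (Nat.fib (m + 1) : ℝ) * goldenRatio_add_goldenConj

lemma abs_goldenConj_pow_lt {n : ℕ} (hn : 2 ≤ n) : |ψ ^ n| < 1 / 2 := by
  have hψ : |ψ| ≤ 1 := abs_le.mpr ⟨neg_one_lt_goldenConj.le, goldenConj_neg.le.trans zero_le_one⟩
  have h2 : (2 : ℝ) < √5 := by
    rw [Real.lt_sqrt zero_le_two]
    norm_num
  calc |ψ ^ n| = |ψ| ^ n := abs_pow ψ n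
    _ ≤ |ψ| ^ 2 := pow_le_pow_of_le_one (abs_nonneg ψ) hψ hn
    _ = ψ + 1 := by rw [sq_abs, goldenConj_sq]
    _ < 1 / 2 := by rw [goldenConj]; linarith

/-- For `n ≥ 2`, the number of non-adjacent subsets of `Z/nZ` is the nearest
integer to `φ^n`, where `φ = (1 + √5)/2`:  `|s n − φ^n| < 1/2`. -/
theorem numNonAdjacent_near_golden_pow (n : ℕ) (hn : 2 ≤ n) :
    |(numNonAdjacent n : ℝ) - ((1 + Real.sqrt 5) / 2) ^ n| < 1 / 2 := by
  obtain ⟨m, rfl⟩ : ∃ m, n = m + 1 := ⟨n - 1, by omega⟩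
  rw [numNonAdjacent_succ, fib_add_two_add_fib, add_sub_cancel_left]
  exact abs_goldenConj_pow_lt hn
end

section
/- Let M be a matroid of rank k on ground set E, and let CH be the set of k-element subsets of E that are not bases. Then M is sparse paving (i.e., every element of CH is both a circuit and a hyperplane) if and only if for all distinct C, C' ∈ CH, the symmetric difference C △ C' has cardinality at least 4. -/
/-- `B` is the family of bases of a matroid on ground set `E`: it is nonempty,
consists of subsets of `E`, and satisfies the basis exchange axiom. -/
def IsBaseFamily {α : Type*} [DecidableEq α] (E : Finset α) (B : Set (Finset α)) : Prop :=
  B.Nonempty ∧ (∀ b ∈ B, b ⊆ E) ∧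
    ∀ b₁ ∈ B, ∀ b₂ ∈ B, ∀ e ∈ b₁, e ∉ b₂ →
      ∃ f ∈ b₂, f ∉ b₁ ∧ insert f (b₁.erase e) ∈ B

/-- A set is independent if it is contained in some basis. -/
def IndepIn {α : Type*} (B : Set (Finset α)) (X : Finset α) : Prop :=
  ∃ b ∈ B, X ⊆ b

/-- The rank of a set `X`: the maximum of `|X ∩ b|` over bases `b`. -/
noncomputable def rkIn {α : Type*} [DecidableEq α] (B : Set (Finset α)) (X : Finset α) : ℕ :=
  sSup ((fun b => (X ∩ b).card) '' B)

/-- A circuit: a minimal dependent subset of `E`. -/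
def IsCircuitIn {α : Type*} [DecidableEq α] (E : Finset α) (B : Set (Finset α))
    (C : Finset α) : Prop :=
  C ⊆ E ∧ ¬ IndepIn B C ∧ ∀ X ⊂ C, IndepIn B X

/-- A flat: a subset of `E` such that every strictly larger subset of `E` has
strictly larger rank. -/
def IsFlatIn {α : Type*} [DecidableEq α] (E : Finset α) (B : Set (Finset α))
    (F : Finset α) : Prop :=
  F ⊆ E ∧ ∀ G : Finset α, F ⊂ G → G ⊆ E → rkIn B F < rkIn B G

/-- A hyperplane: a flat of rank `rank(M) - 1`. -/
def IsHyperplaneIn {α : Type*} [DecidableEq α] (E : Finset α) (B : Set (Finset α))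
    (F : Finset α) : Prop :=
  IsFlatIn E B F ∧ rkIn B F + 1 = rkIn B E

/-- A circuit-hyperplane: a set that is both a circuit and a hyperplane. -/
def IsCircuitHyperplaneIn {α : Type*} [DecidableEq α] (E : Finset α) (B : Set (Finset α))
    (C : Finset α) : Prop :=
  IsCircuitIn E B C ∧ IsHyperplaneIn E B C

/-- A matroid `M` of rank `k` (all bases have `k` elements) is sparse paving, i.e. every
`k`-subset of `E` that is not a basis is both a circuit and a hyperplane, if and only if
any two distinct non-basis `k`-subsets have symmetric difference of cardinality at least 4. -/
theorem sparsePaving_iff_symmDiff {α : Type*} [DecidableEq α] (E : Finset α)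
    (B : Set (Finset α)) (k : ℕ) (hB : IsBaseFamily E B) (hrk : ∀ b ∈ B, b.card = k) :
    (∀ C : Finset α, C ⊆ E → C.card = k → C ∉ B → IsCircuitHyperplaneIn E B C) ↔
      ∀ C C' : Finset α, C ⊆ E → C' ⊆ E → C.card = k → C'.card = k →
        C ∉ B → C' ∉ B → C ≠ C' → 4 ≤ (symmDiff C C').card := by
  obtain ⟨⟨b0, hb0⟩, hBE, hexch⟩ := hB
  have hbdd : ∀ X : Finset α, BddAbove ((fun b => (X ∩ b).card) '' B) := by
    intro X
    refine ⟨k, ?_⟩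
    rintro n ⟨b, hb, rfl⟩
    exact (Finset.card_le_card Finset.inter_subset_right).trans (hrk b hb).le
  have hSne : ∀ X : Finset α, ((fun b => (X ∩ b).card) '' B).Nonempty :=
    fun X => ⟨_, ⟨b0, hb0, rfl⟩⟩
  have hrkle : ∀ X : Finset α, rkIn B X ≤ k := by
    intro X
    apply csSup_le (hSne X)
    rintro n ⟨b, hb, rfl⟩
    exact (Finset.card_le_card Finset.inter_subset_right).trans (hrk b hb).le
  have hrkge : ∀ (X : Finset α), ∀ b ∈ B, (X ∩ b).card ≤ rkIn B X :=
    fun X b hb => le_csSup (hbdd X) ⟨b, hb, rfl⟩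
  have hrkE : rkIn B E = k := by
    refine le_antisymm (hrkle E) ?_
    have h := hrkge E b0 hb0
    rwa [Finset.inter_eq_right.mpr (hBE b0 hb0), hrk b0 hb0] at h
  have hrk_attain : ∀ X : Finset α, ∃ b ∈ B, (X ∩ b).card = rkIn B X := by
    intro X
    obtain ⟨b, hb, h⟩ := Nat.sSup_mem (hSne X) (hbdd X)
    exact ⟨b, hb, h⟩
  have hdep : ∀ C : Finset α, C.card = k → C ∉ B → ∀ b ∈ B, (C ∩ b).card < k := by
    intro C hCk hCB b hb
    rcases lt_or_eq_of_le
        ((Finset.card_le_card Finset.inter_subset_right).trans (hrk b hb).le) with h | h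
    · exact h
    · exfalso
      have hsub : C ∩ b = b := Finset.eq_of_subset_of_card_le Finset.inter_subset_right
        (by rw [h, hrk b hb])
      have hbC : b ⊆ C := by rw [← hsub]; exact Finset.inter_subset_left
      have : b = C := Finset.eq_of_subset_of_card_le hbC (by rw [hCk, hrk b hb])
      exact hCB (this ▸ hb)
  constructor
  · -- sparse paving → min distance 4
    intro H C C' hCE hC'E hCk hC'k hCB hC'B hne'
    by_contra hlt
    push_neg at hlt
    -- extract single exchange: C' = insert e (C.erase x)
    have h1 : (C \ C').card + (C ∩ C').card = C.card := Finset.card_sdiff_add_card_inter C C'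
    have h2 : (C' \ C).card + (C' ∩ C).card = C'.card := Finset.card_sdiff_add_card_inter C' C
    rw [Finset.inter_comm] at h2
    have hsd : (symmDiff C C').card = (C \ C').card + (C' \ C).card := by
      rw [symmDiff_def]
      exact Finset.card_union_of_disjoint (disjoint_sdiff_sdiff)
    have hpos : (C \ C').card ≠ 0 := by
      intro h0
      apply hne'
      exact Finset.eq_of_subset_of_card_le
        (by rw [← Finset.sdiff_eq_empty_iff_subset]; exact Finset.card_eq_zero.mp h0)
        (by rw [hCk, hC'k])
    have hone : (C \ C').card = 1 ∧ (C' \ C).card = 1 := by omega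
    obtain ⟨x, hx⟩ := Finset.card_eq_one.mp hone.1
    obtain ⟨e, he⟩ := Finset.card_eq_one.mp hone.2
    have hxiff : ∀ a, (a ∈ C ∧ a ∉ C') ↔ a = x := by
      intro a; rw [← Finset.mem_sdiff, hx, Finset.mem_singleton]
    have heiff : ∀ a, (a ∈ C' ∧ a ∉ C) ↔ a = e := by
      intro a; rw [← Finset.mem_sdiff, he, Finset.mem_singleton]
    have hxC : x ∈ C := ((hxiff x).mpr rfl).1
    have hxC' : x ∉ C' := ((hxiff x).mpr rfl).2
    have heC' : e ∈ C' := ((heiff e).mpr rfl).1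
    have heC : e ∉ C := ((heiff e).mpr rfl).2
    have hC'eq : C' = insert e (C.erase x) := by
      ext a
      simp only [Finset.mem_insert, Finset.mem_erase]
      constructor
      · intro haC'
        by_cases haC : a ∈ C
        · right
          refine ⟨?_, haC⟩
          intro rfl'
          exact hxC' (rfl' ▸ haC')
        · exact Or.inl ((heiff a).mp ⟨haC', haC⟩)
      · rintro (rfl | ⟨hax, haC⟩)
        · exact heC'
        · by_contra haC'
          exact hax ((hxiff a).mp ⟨haC, haC'⟩)
    obtain ⟨⟨_, hCdep, hCcirc⟩, ⟨⟨_, hCflat⟩, hCrk⟩⟩ := H C hCE hCk hCB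
    have heE : e ∈ E := hC'E heC'
    -- step 1: a basis inside insert e C
    have hflt : rkIn B C < rkIn B (insert e C) :=
      hCflat _ (Finset.ssubset_insert heC) (Finset.insert_subset heE hCE)
    have hrkC1 : rkIn B C + 1 = k := by rw [hCrk, hrkE]
    have h4 : rkIn B (insert e C) = k :=
      le_antisymm (hrkle _) (by omega)
    obtain ⟨b, hb, hbcard⟩ := hrk_attain (insert e C)
    rw [h4] at hbcard
    have hbsub : b ⊆ insert e C := by
      have hh : insert e C ∩ b = b := Finset.eq_of_subset_of_card_le
        Finset.inter_subset_right (by rw [hbcard, hrk b hb])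
      rw [← hh]; exact Finset.inter_subset_left
    -- step 2: C.erase x is independent, contained in basis b3 = insert f (C.erase x)
    obtain ⟨b3, hb3, hb3sub⟩ := hCcirc _ (Finset.erase_ssubset hxC)
    have hcard3 : (b3 \ C.erase x).card = 1 := by
      rw [Finset.card_sdiff_of_subset hb3sub, hrk b3 hb3, Finset.card_erase_of_mem hxC, hCk]
      have : 1 ≤ k := by
        rw [← hCk]; exact Finset.card_pos.mpr ⟨x, hxC⟩
      omega
    obtain ⟨f, hf⟩ := Finset.card_eq_one.mp hcard3
    have hfmem : f ∈ b3 ∧ f ∉ C.erase x := by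
      have := hf ▸ Finset.mem_singleton_self f
      simpa [Finset.mem_sdiff] using this
    have hb3eq : b3 = insert f (C.erase x) := by
      ext a
      simp only [Finset.mem_insert]
      constructor
      · intro hab3
        by_cases h' : a ∈ C.erase x
        · exact Or.inr h'
        · left
          have : a ∈ b3 \ C.erase x := Finset.mem_sdiff.mpr ⟨hab3, h'⟩
          rw [hf, Finset.mem_singleton] at this
          exact this
      · rintro (rfl | h')
        · exact hfmem.1
        · exact hb3sub h'
    have hfx : f ≠ x := by
      rintro rfl
      apply hCB
      rw [hb3eq, Finset.insert_erase hxC] at hb3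
      exact hb3
    have hfe : f ≠ e := by
      rintro rfl
      apply hC'B
      rw [hb3eq, ← hC'eq] at hb3
      exact hb3
    have hfC : f ∉ C := by
      intro hfc
      exact hfmem.2 (Finset.mem_erase.mpr ⟨hfx, hfc⟩)
    have hfb : f ∉ b := by
      intro hfb'
      rcases Finset.mem_insert.mp (hbsub hfb') with h' | h'
      · exact hfe h'
      · exact hfC h'
    -- step 3: exchange
    obtain ⟨g, hgb, hgb3, hg⟩ := hexch b3 hb3 b hb f hfmem.1 hfb
    have herase : b3.erase f = C.erase x := by
      rw [hb3eq, Finset.erase_insert hfmem.2]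
    rw [herase] at hg
    have hgcase : g = e ∨ g = x := by
      rcases Finset.mem_insert.mp (hbsub hgb) with h' | h'
      · exact Or.inl h'
      · right
        by_contra hgx
        exact hgb3 (hb3eq ▸ Finset.mem_insert_of_mem (Finset.mem_erase.mpr ⟨hgx, h'⟩))
    rcases hgcase with rfl | rfl
    · exact hC'B (hC'eq ▸ hg)
    · apply hCB
      rwa [Finset.insert_erase hxC] at hg
  · -- min distance 4 → sparse paving
    intro H C hCE hCk hCB
    have hk1 : 1 ≤ k := by
      by_contra h
      have hk0 : k = 0 := by omega
      apply hCB
      have hC0 : C = ∅ := Finset.card_eq_zero.mp (by rw [hCk, hk0])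
      have hb00 : b0 = ∅ := Finset.card_eq_zero.mp (by rw [hrk b0 hb0, hk0])
      rw [hC0, ← hb00]
      exact hb0
    have hCne : C.Nonempty := Finset.card_pos.mp (by omega)
    have hEC : ∃ e ∈ E, e ∉ C := by
      by_contra h
      push_neg at h
      have hEsub : E ⊆ C := h
      have : C = E := Finset.Subset.antisymm hCE hEsub
      apply hCB
      have : b0 = C := Finset.eq_of_subset_of_card_le (this ▸ hBE b0 hb0)
        (by rw [hCk, hrk b0 hb0])
      rwa [← this]
    -- key claim: every single exchange of C is a basis
    have claim : ∀ x ∈ C, ∀ e ∈ E, e ∉ C → insert e (C.erase x) ∈ B := by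
      intro x hx e heE heC
      by_contra hD
      have heCx : e ∉ C.erase x := fun h => heC (Finset.mem_of_mem_erase h)
      have hDE : insert e (C.erase x) ⊆ E :=
        Finset.insert_subset heE ((Finset.erase_subset x C).trans hCE)
      have hDk : (insert e (C.erase x)).card = k := by
        rw [Finset.card_insert_of_notMem heCx, Finset.card_erase_of_mem hx, hCk]
        omega
      have hDne : C ≠ insert e (C.erase x) := by
        intro h
        exact heC (h ▸ Finset.mem_insert_self e _)
      have h4 := H C _ hCE hDE hCk hDk hCB hD hDne
      have hsub : symmDiff C (insert e (C.erase x)) ⊆ {x, e} := by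
        intro a ha
        rw [Finset.mem_symmDiff] at ha
        rcases ha with ⟨haC, haD⟩ | ⟨haD, haC⟩
        · simp only [Finset.mem_insert, Finset.mem_erase, not_or, not_and] at haD
          have : a = x := by
            by_contra hax
            exact (haD.2 hax) haC
          simp [this]
        · rcases Finset.mem_insert.mp haD with rfl | h'
          · simp
          · exact absurd (Finset.mem_of_mem_erase h') haC
      have hle : (symmDiff C (insert e (C.erase x))).card ≤ 2 := by
        refine (Finset.card_le_card hsub).trans ?_
        exact (Finset.card_insert_le x {e}).trans (by simp)
      omega
    obtain ⟨e0, he0E, he0C⟩ := hEC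
    obtain ⟨x0, hx0⟩ := hCne
    -- rank of C is k - 1
    have hrkCle : rkIn B C + 1 ≤ k := by
      have : rkIn B C ≤ k - 1 := by
        apply csSup_le (hSne C)
        rintro n ⟨b, hb, rfl⟩
        have := hdep C hCk hCB b hb
        simp only []
        omega
      omega
    have hrkCge : k ≤ rkIn B C + 1 := by
      have hb' : insert e0 (C.erase x0) ∈ B := claim x0 hx0 e0 he0E he0C
      have hss : C.erase x0 ⊆ C ∩ insert e0 (C.erase x0) := by
        intro a ha
        exact Finset.mem_inter.mpr ⟨Finset.mem_of_mem_erase ha, Finset.mem_insert_of_mem ha⟩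
      have := (Finset.card_le_card hss).trans (hrkge C _ hb')
      rw [Finset.card_erase_of_mem hx0, hCk] at this
      omega
    have hrkC : rkIn B C + 1 = k := le_antisymm hrkCle hrkCge
    refine ⟨⟨hCE, ?_, ?_⟩, ⟨⟨hCE, ?_⟩, ?_⟩⟩
    · -- dependent
      rintro ⟨b, hb, hsub⟩
      apply hCB
      have : C = b := Finset.eq_of_subset_of_card_le hsub (by rw [hrk b hb, hCk])
      rwa [this]
    · -- every proper subset independent
      intro X hX
      obtain ⟨x, hxC, hxX⟩ := Finset.exists_of_ssubset hX
      refine ⟨insert e0 (C.erase x), claim x hxC e0 he0E he0C, ?_⟩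
      intro a haX
      apply Finset.mem_insert_of_mem
      exact Finset.mem_erase.mpr ⟨fun h => hxX (h ▸ haX), hX.subset haX⟩
    · -- flat
      intro G hCG hGE
      obtain ⟨e, heG, heC⟩ := Finset.exists_of_ssubset hCG
      have hb' : insert e (C.erase x0) ∈ B := claim x0 hx0 e (hGE heG) heC
      have hbG : insert e (C.erase x0) ⊆ G :=
        Finset.insert_subset heG (((Finset.erase_subset x0 C).trans hCG.subset))
      have hGinter : G ∩ insert e (C.erase x0) = insert e (C.erase x0) :=
        Finset.inter_eq_right.mpr hbG
      have hGge : k ≤ rkIn B G := by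
        have := hrkge G _ hb'
        rwa [hGinter, hrk _ hb'] at this
      omega
    · rw [hrkE, hrkC]
end

section
/- If C is a circuit-hyperplane of a matroid M = (E, B), then B ∪ {C} is again the basis family of a matroid on E (the relaxation of M at C). -/
private lemma basis_card_eq_aux {α : Type*} [DecidableEq α] {B : Set (Finset α)}
    (hex : ∀ b₁ ∈ B, ∀ b₂ ∈ B, ∀ e ∈ b₁, e ∉ b₂ →
      ∃ f ∈ b₂, f ∉ b₁ ∧ insert f (b₁.erase e) ∈ B) :
    ∀ (n : ℕ) (b₁ b₂ : Finset α), b₁ ∈ B → b₂ ∈ B → (b₁ \ b₂).card = n →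
      b₁.card = b₂.card := by
  intro n
  induction n with
  | zero =>
    intro b₁ b₂ h₁ h₂ hn
    have hsub : b₁ ⊆ b₂ := by
      rwa [Finset.card_eq_zero, Finset.sdiff_eq_empty_iff_subset] at hn
    have hsub' : b₂ ⊆ b₁ := by
      intro x hx
      by_contra hxb
      obtain ⟨f, hf, hfb, -⟩ := hex b₂ h₂ b₁ h₁ x hx hxb
      exact hfb (hsub hf)
    exact le_antisymm (Finset.card_le_card hsub) (Finset.card_le_card hsub')
  | succ n ih =>
    intro b₁ b₂ h₁ h₂ hn
    have hne : (b₁ \ b₂).Nonempty := by rw [← Finset.card_pos, hn]; omega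
    obtain ⟨e, he⟩ := hne
    rw [Finset.mem_sdiff] at he
    obtain ⟨f, hf₂, hf₁, hB'⟩ := hex b₁ h₁ b₂ h₂ e he.1 he.2
    have hfe : f ∉ b₁.erase e := fun h => hf₁ (Finset.mem_of_mem_erase h)
    have hcard : (insert f (b₁.erase e)).card = b₁.card := by
      rw [Finset.card_insert_of_notMem hfe, Finset.card_erase_of_mem he.1]
      have : 1 ≤ b₁.card := Finset.card_pos.2 ⟨e, he.1⟩
      omega
    have hsd : insert f (b₁.erase e) \ b₂ = (b₁ \ b₂).erase e := by
      ext x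
      simp only [Finset.mem_sdiff, Finset.mem_insert, Finset.mem_erase]
      constructor
      · rintro ⟨(rfl | ⟨hxe, hx⟩), hxb₂⟩
        · exact absurd hf₂ hxb₂
        · exact ⟨hxe, hx, hxb₂⟩
      · rintro ⟨hxe, hx, hxb₂⟩
        exact ⟨Or.inr ⟨hxe, hx⟩, hxb₂⟩
    have hrec := ih (insert f (b₁.erase e)) b₂ hB' h₂ (by
      rw [hsd, Finset.card_erase_of_mem (Finset.mem_sdiff.2 he), hn]; omega)
    omega

private lemma exists_basis_between {α : Type*} [DecidableEq α] {B : Set (Finset α)}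
    (hex : ∀ b₁ ∈ B, ∀ b₂ ∈ B, ∀ e ∈ b₁, e ∉ b₂ →
      ∃ f ∈ b₂, f ∉ b₁ ∧ insert f (b₁.erase e) ∈ B) :
    ∀ (n : ℕ) (I b b₂ : Finset α), b ∈ B → b₂ ∈ B → I ⊆ b → (b \ (I ∪ b₂)).card = n →
      ∃ b' ∈ B, I ⊆ b' ∧ b' ⊆ I ∪ b₂ := by
  intro n
  induction n with
  | zero =>
    intro I b b₂ hb hb₂ hI hn
    rw [Finset.card_eq_zero, Finset.sdiff_eq_empty_iff_subset] at hn
    exact ⟨b, hb, hI, hn⟩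
  | succ n ih =>
    intro I b b₂ hb hb₂ hI hn
    have hne : (b \ (I ∪ b₂)).Nonempty := by rw [← Finset.card_pos, hn]; omega
    obtain ⟨x, hx⟩ := hne
    rw [Finset.mem_sdiff, Finset.mem_union, not_or] at hx
    obtain ⟨hxb, hxI, hxb₂⟩ := hx
    obtain ⟨f, hf₂, hfb, hB'⟩ := hex b hb b₂ hb₂ x hxb hxb₂
    have hI' : I ⊆ insert f (b.erase x) := fun y hy =>
      Finset.mem_insert_of_mem (Finset.mem_erase.2 ⟨fun h => hxI (h ▸ hy), hI hy⟩)
    have hsd : insert f (b.erase x) \ (I ∪ b₂) = (b \ (I ∪ b₂)).erase x := by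
      ext y
      simp only [Finset.mem_sdiff, Finset.mem_insert, Finset.mem_erase, Finset.mem_union,
        not_or]
      constructor
      · rintro ⟨(rfl | ⟨hye, hy⟩), hyI, hyb₂⟩
        · exact absurd hf₂ hyb₂
        · exact ⟨hye, hy, hyI, hyb₂⟩
      · rintro ⟨hye, hy, hyI, hyb₂⟩
        exact ⟨Or.inr ⟨hye, hy⟩, hyI, hyb₂⟩
    exact ih I (insert f (b.erase x)) b₂ hB' hb₂ hI' (by
      rw [hsd, Finset.card_erase_of_mem
        (Finset.mem_sdiff.2 ⟨hxb, by rw [Finset.mem_union]; exact not_or.2 ⟨hxI, hxb₂⟩⟩), hn]; omega)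

/-- Relaxation: if `C` is a circuit-hyperplane of the matroid with basis family `B`
on ground set `E`, then `B ∪ {C}` is again the basis family of a matroid on `E`. -/
theorem relaxation_isBaseFamily {α : Type*} [DecidableEq α] (E : Finset α)
    (B : Set (Finset α)) (hB : IsBaseFamily E B) (C : Finset α)
    (hC : IsCircuitHyperplaneIn E B C) :
    IsBaseFamily E (insert C B) := by
  obtain ⟨⟨b₀, hb₀⟩, hsub, hex⟩ := hB
  obtain ⟨⟨hCE, hCdep, hCind⟩, ⟨-, hflat⟩, hrk⟩ := hC
  set r := b₀.card with hr
  -- all bases have cardinality r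
  have hcard : ∀ b ∈ B, b.card = r := fun b hb =>
    basis_card_eq_aux hex _ b b₀ hb hb₀ rfl
  -- rank basics
  have bdd : ∀ X : Finset α, BddAbove ((fun b => (X ∩ b).card) '' B) := fun X =>
    ⟨X.card, by rintro m ⟨b, hb, rfl⟩; exact Finset.card_le_card Finset.inter_subset_left⟩
  have neI : ∀ X : Finset α, ((fun b => (X ∩ b).card) '' B).Nonempty := fun X =>
    ⟨_, ⟨b₀, hb₀, rfl⟩⟩
  have rk_ge : ∀ (X : Finset α), ∀ b ∈ B, (X ∩ b).card ≤ rkIn B X := fun X b hb =>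
    le_csSup (bdd X) ⟨b, hb, rfl⟩
  have rk_attain : ∀ X : Finset α, ∃ b ∈ B, (X ∩ b).card = rkIn B X := by
    intro X
    have := Nat.sSup_mem (neI X) (bdd X)
    obtain ⟨b, hb, hb'⟩ := this
    exact ⟨b, hb, hb'⟩
  have rk_le : ∀ X : Finset α, rkIn B X ≤ r := by
    intro X
    apply csSup_le (neI X)
    rintro m ⟨b, hb, rfl⟩
    calc (X ∩ b).card ≤ b.card := Finset.card_le_card Finset.inter_subset_right
    _ = r := hcard b hb
  have rkE : rkIn B E = r := by
    apply le_antisymm (rk_le E)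
    have := rk_ge E b₀ hb₀
    rwa [Finset.inter_eq_right.2 (hsub b₀ hb₀), ← hr] at this
  have hrkC : rkIn B C + 1 = r := by rw [hrk, rkE]
  have hCnotB : C ∉ B := fun h => hCdep ⟨C, h, Finset.Subset.refl C⟩
  -- |C| = r
  have hCne : C.Nonempty := by
    rcases Finset.eq_empty_or_nonempty C with rfl | h
    · exact absurd ⟨b₀, hb₀, Finset.empty_subset _⟩ hCdep
    · exact h
  have hCcard : C.card = r := by
    apply le_antisymm
    · obtain ⟨x, hx⟩ := hCne
      obtain ⟨b, hb, hsb⟩ := hCind (C.erase x) (Finset.erase_ssubset hx)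
      have h1 : C.erase x ⊆ C ∩ b := Finset.subset_inter (Finset.erase_subset x C) hsb
      have h2 := Finset.card_le_card h1
      have h3 := rk_ge C b hb
      have h4 := Finset.card_erase_of_mem hx
      have : 1 ≤ C.card := Finset.card_pos.2 ⟨x, hx⟩
      omega
    · obtain ⟨b, hb, hab⟩ := rk_attain C
      by_contra hlt
      push_neg at hlt
      have h1 : (C ∩ b).card ≤ C.card := Finset.card_le_card Finset.inter_subset_left
      have h2 : (C ∩ b).card = C.card := by omega
      have h3 : C ∩ b = C := Finset.eq_of_subset_of_card_le Finset.inter_subset_left (by omega)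
      exact hCdep ⟨b, hb, by rw [← h3]; exact Finset.inter_subset_right⟩
  -- any independent set of size r is a basis
  have indep_basis : ∀ X : Finset α, X.card = r → (∃ b ∈ B, X ⊆ b) → X ∈ B := by
    rintro X hX ⟨b, hb, hXb⟩
    have : X = b := Finset.eq_of_subset_of_card_le hXb (by rw [hX, hcard b hb])
    rwa [this]
  refine ⟨⟨b₀, Set.mem_insert_of_mem _ hb₀⟩, ?_, ?_⟩
  · rintro b (rfl | hb)
    · exact hCE
    · exact hsub b hb
  · rintro b₁ h₁ b₂ h₂ e he₁ he₂
    rcases h₁ with rfl | h₁ <;> rcases h₂ with rfl | h₂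
    · exact absurd he₁ he₂
    · -- b₁ = C, b₂ ∈ B
      have hD : IndepIn B (b₁.erase e) := hCind _ (Finset.erase_ssubset he₁)
      obtain ⟨b, hb, hDb⟩ := hD
      have hDcard : (b₁.erase e).card + 1 = r := by
        rw [Finset.card_erase_of_mem he₁, hCcard]
        have : 1 ≤ b₁.card := Finset.card_pos.2 ⟨e, he₁⟩
        omega
      have hone : (b \ b₁.erase e).card = 1 := by
        rw [Finset.card_sdiff_of_subset hDb, hcard b hb]; omega
      obtain ⟨g, hg⟩ := Finset.card_eq_one.1 hone
      have hgb : g ∈ b ∧ g ∉ b₁.erase e := by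
        have : g ∈ b \ b₁.erase e := by rw [hg]; exact Finset.mem_singleton_self g
        exact Finset.mem_sdiff.1 this
      have hbeq : b = insert g (b₁.erase e) := by
        apply Finset.eq_of_subset_of_card_le
        · intro y hy
          by_cases hyD : y ∈ b₁.erase e
          · exact Finset.mem_insert_of_mem hyD
          · have : y ∈ b \ b₁.erase e := Finset.mem_sdiff.2 ⟨hy, hyD⟩
            rw [hg, Finset.mem_singleton] at this
            rw [this]; exact Finset.mem_insert_self _ _
        · rw [Finset.card_insert_of_notMem hgb.2, hcard b hb]; omega
      have hge : g ≠ e := by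
        rintro rfl
        rw [Finset.insert_erase he₁] at hbeq
        exact hCnotB (hbeq ▸ hb)
      have hgC : g ∉ b₁ := fun h => hgb.2 (Finset.mem_erase.2 ⟨hge, h⟩)
      by_cases hgb₂ : g ∈ b₂
      · exact ⟨g, hgb₂, hgC, Or.inr (hbeq ▸ hb)⟩
      · obtain ⟨f, hf₂, hfb, hfB⟩ := hex b hb b₂ h₂ g hgb.1 hgb₂
        have hbg : b.erase g = b₁.erase e := by
          rw [hbeq, Finset.erase_insert hgb.2]
        rw [hbg] at hfB
        have hfe : f ≠ e := by
          rintro rfl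
          rw [Finset.insert_erase he₁] at hfB
          exact hCnotB hfB
        have hfC : f ∉ b₁ := by
          intro h
          exact hfb (hbeq ▸ Finset.mem_insert_of_mem (Finset.mem_erase.2 ⟨hfe, h⟩))
        exact ⟨f, hf₂, hfC, Or.inr hfB⟩
    · -- b₁ ∈ B, b₂ = C
      have hDcard : (b₁.erase e).card + 1 = r := by
        rw [Finset.card_erase_of_mem he₁, hcard b₁ h₁]
        have : 1 ≤ b₁.card := Finset.card_pos.2 ⟨e, he₁⟩
        omega
      by_cases hDC : b₁.erase e ⊆ b₂
      · -- D ⊆ C : the answer is C itself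
        have : ∃ f, f ∈ b₂ \ b₁.erase e := by
          apply Finset.card_pos.1
          rw [Finset.card_sdiff_of_subset hDC, hCcard]; omega
        obtain ⟨f, hf⟩ := this
        rw [Finset.mem_sdiff] at hf
        have hfe : f ≠ e := fun h => he₂ (h ▸ hf.1)
        have hfb₁ : f ∉ b₁ := fun h => hf.2 (Finset.mem_erase.2 ⟨hfe, h⟩)
        have heq : insert f (b₁.erase e) = b₂ := by
          apply Finset.eq_of_subset_of_card_le
          · intro y hy
            rcases Finset.mem_insert.1 hy with rfl | hy
            · exact hf.1
            · exact hDC hy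
          · rw [Finset.card_insert_of_notMem hf.2, hCcard]; omega
        exact ⟨f, hf.1, hfb₁, Or.inl heq⟩
      · -- D ⊄ C : use the flat property
        have hGssub : b₂ ⊂ b₂ ∪ b₁.erase e := by
          rw [Finset.ssubset_iff_of_subset Finset.subset_union_left]
          obtain ⟨d, hd⟩ := Finset.not_subset.1 hDC
          exact ⟨d, Finset.mem_union_right _ hd.1, hd.2⟩
        have hGE : b₂ ∪ b₁.erase e ⊆ E := by
          apply Finset.union_subset hCE
          exact (Finset.erase_subset e b₁).trans (hsub b₁ h₁)
        have hrkG := hflat _ hGssub hGE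
        have hrkG' : rkIn B (b₂ ∪ b₁.erase e) = r := le_antisymm (rk_le _) (by omega)
        obtain ⟨b, hb, hab⟩ := rk_attain (b₂ ∪ b₁.erase e)
        have hbsub : b ⊆ b₂ ∪ b₁.erase e := by
          have h3 : (b₂ ∪ b₁.erase e) ∩ b = b :=
            Finset.eq_of_subset_of_card_le Finset.inter_subset_right
              (by rw [hab, hrkG', hcard b hb])
          rw [← h3]; exact Finset.inter_subset_left
        obtain ⟨b', hb', hDb', hb'sub⟩ := exists_basis_between hex _
          (b₁.erase e) b₁ b h₁ hb (Finset.erase_subset e b₁) rfl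
        have hb'C : b' ⊆ b₂ ∪ b₁.erase e := by
          intro y hy
          rcases Finset.mem_union.1 (hb'sub hy) with h | h
          · exact Finset.mem_union_right _ h
          · exact hbsub h
        have hone : (b' \ b₁.erase e).card = 1 := by
          rw [Finset.card_sdiff_of_subset hDb', hcard b' hb']; omega
        obtain ⟨f, hf⟩ := Finset.card_eq_one.1 hone
        have hfmem : f ∈ b' ∧ f ∉ b₁.erase e := by
          have : f ∈ b' \ b₁.erase e := by rw [hf]; exact Finset.mem_singleton_self f
          exact Finset.mem_sdiff.1 this
        have hfb₂ : f ∈ b₂ := by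
          rcases Finset.mem_union.1 (hb'C hfmem.1) with h | h
          · exact h
          · exact absurd h hfmem.2
        have hfe : f ≠ e := fun h => he₂ (h ▸ hfb₂)
        have hfb₁ : f ∉ b₁ := fun h => hfmem.2 (Finset.mem_erase.2 ⟨hfe, h⟩)
        have heq : insert f (b₁.erase e) = b' := by
          apply Finset.eq_of_subset_of_card_le
          · intro y hy
            rcases Finset.mem_insert.1 hy with rfl | hy
            · exact hfmem.1
            · exact hDb' hy
          · rw [Finset.card_insert_of_notMem hfmem.2, hcard b' hb']; omega
        exact ⟨f, hfb₂, hfb₁, Or.inr (heq ▸ hb')⟩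
    · -- both in B
      obtain ⟨f, hf₂, hf₁, hfB⟩ := hex b₁ h₁ b₂ h₂ e he₁ he₂
      exact ⟨f, hf₂, hf₁, Or.inr hfB⟩
end

section
/- For any k-element subset I of {1,...,n} and any t ∈ {1,...,n}, the collection {J ∈ binom([n], k) : I ≤_t J} is the set of bases of a matroid on {1,...,n} (the cyclically shifted Schubert matroid SM^t_I). -/
/-- The Gale order `≤_t` on subsets of `Fin n` for the cyclic linear order starting at `t`
(in which `a ≤_t b` iff `(a - t).val ≤ (b - t).val`): `I ≤_t J` iff when both sets are
listed in `≤_t`-increasing order the `i`-th element of `I` is `≤_t` the `i`-th element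
of `J` for all `i`; equivalently, every `≤_t`-initial segment contains at least as many
elements of `I` as of `J`. -/
def galeLE {n : ℕ} (t : Fin n) (I J : Finset (Fin n)) : Prop :=
  ∀ x : Fin n,
    (J.filter fun b => (b - t).val ≤ (x - t).val).card ≤
      (I.filter fun a => (a - t).val ≤ (x - t).val).card

def cntf {n : ℕ} (t : Fin n) (S : Finset (Fin n)) (m : ℕ) : ℕ :=
  (S.filter fun a => (a - t).val ≤ m).card

lemma cntf_insert {n : ℕ} (t : Fin n) {S : Finset (Fin n)} {g : Fin n} (hg : g ∉ S) (m : ℕ) :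
    cntf t (insert g S) m = cntf t S m + (if (g - t).val ≤ m then 1 else 0) := by
  unfold cntf
  rw [Finset.filter_insert]
  split_ifs with h
  · rw [Finset.card_insert_of_notMem (fun hc => hg (Finset.mem_filter.mp hc).1)]
  · simp

lemma cntf_erase {n : ℕ} (t : Fin n) {S : Finset (Fin n)} {g : Fin n} (hg : g ∈ S) (m : ℕ) :
    cntf t S m = cntf t (S.erase g) m + (if (g - t).val ≤ m then 1 else 0) := by
  unfold cntf
  rw [Finset.filter_erase]
  split_ifs with h
  · have hmem : g ∈ S.filter fun a => (a - t).val ≤ m := Finset.mem_filter.mpr ⟨hg, h⟩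
    rw [Finset.card_erase_of_mem hmem]
    have : 0 < (S.filter fun a => (a - t).val ≤ m).card := Finset.card_pos.mpr ⟨g, hmem⟩
    omega
  · have hg' : g ∉ S.filter fun a => (a - t).val ≤ m :=
      fun hc => h (Finset.mem_filter.mp hc).2
    rw [Finset.erase_eq_of_notMem hg', Nat.add_zero]

lemma cntf_add_compl {n : ℕ} (t : Fin n) (S : Finset (Fin n)) (m : ℕ) :
    cntf t S m + (S.filter fun a => ¬ (a - t).val ≤ m).card = S.card :=
  Finset.card_filter_add_card_filter_not _

/-- For any `k`-element subset `I` of `Fin n` and any `t`, the collection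
`{J : |J| = k, I ≤_t J}` is the set of bases of a matroid on `Fin n`
(the cyclically shifted Schubert matroid `SM^t_I`). -/
theorem shiftedSchubert_isBaseFamily (n k : ℕ) (hk : k ≤ n) (I : Finset (Fin n))
    (hI : I.card = k) (t : Fin n) :
    IsBaseFamily (Finset.univ : Finset (Fin n))
      {J : Finset (Fin n) | J.card = k ∧ galeLE t I J} := by
  classical
  refine ⟨⟨I, hI, fun x => le_refl _⟩, fun b _ => b.subset_univ, ?_⟩
  intro b₁ hb₁ b₂ hb₂ e he hne
  obtain ⟨hb₁c, hb₁g⟩ := hb₁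
  obtain ⟨hb₂c, hb₂g⟩ := hb₂
  have hkpos : 0 < k := hb₁c ▸ Finset.card_pos.mpr ⟨e, he⟩
  -- the gale conditions, in cntf form
  have hg₁ : ∀ x : Fin n, cntf t b₁ ((x - t).val) ≤ cntf t I ((x - t).val) := hb₁g
  have hg₂ : ∀ x : Fin n, cntf t b₂ ((x - t).val) ≤ cntf t I ((x - t).val) := hb₂g
  by_cases hA : ∃ f ∈ b₂, f ∉ b₁ ∧ (e - t).val ≤ (f - t).val
  · obtain ⟨f, hf₂, hf₁, hef⟩ := hA
    refine ⟨f, hf₂, hf₁, ?_, ?_⟩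
    · rw [Finset.card_insert_of_notMem (fun hc => hf₁ (Finset.mem_of_mem_erase hc)),
        Finset.card_erase_of_mem he, hb₁c]
      omega
    · intro x
      set m := (x - t).val with hm
      show cntf t (insert f (b₁.erase e)) m ≤ cntf t I m
      have h1 : cntf t (insert f (b₁.erase e)) m
          = cntf t (b₁.erase e) m + (if (f - t).val ≤ m then 1 else 0) :=
        cntf_insert t (fun hc => hf₁ (Finset.mem_of_mem_erase hc)) m
      have h2 : cntf t b₁ m = cntf t (b₁.erase e) m + (if (e - t).val ≤ m then 1 else 0) :=
        cntf_erase t he m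
      have h3 := hg₁ x
      rw [← hm] at h3
      by_cases hfm : (f - t).val ≤ m
      · have hem : (e - t).val ≤ m := le_trans hef hfm
        simp only [hfm, hem, if_true] at h1 h2
        omega
      · simp only [hfm, if_false] at h1
        split_ifs at h2 <;> omega
  · push_neg at hA
    have hne' : (b₂ \ b₁).Nonempty := by
      rw [Finset.sdiff_nonempty]
      intro hsub
      have : b₂ = b₁ := Finset.eq_of_subset_of_card_le hsub (by omega)
      exact hne (this ▸ he)
    obtain ⟨f, hf, hfmax⟩ := Finset.exists_max_image (b₂ \ b₁) (fun a => (a - t).val) hne'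
    obtain ⟨hf₂, hf₁⟩ := Finset.mem_sdiff.mp hf
    have hfe : (f - t).val < (e - t).val := hA f hf₂ hf₁
    refine ⟨f, hf₂, hf₁, ?_, ?_⟩
    · rw [Finset.card_insert_of_notMem (fun hc => hf₁ (Finset.mem_of_mem_erase hc)),
        Finset.card_erase_of_mem he, hb₁c]
      omega
    · intro x
      set m := (x - t).val with hm
      show cntf t (insert f (b₁.erase e)) m ≤ cntf t I m
      have h1 : cntf t (insert f (b₁.erase e)) m
          = cntf t (b₁.erase e) m + (if (f - t).val ≤ m then 1 else 0) :=
        cntf_insert t (fun hc => hf₁ (Finset.mem_of_mem_erase hc)) m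
      have h2 : cntf t b₁ m = cntf t (b₁.erase e) m + (if (e - t).val ≤ m then 1 else 0) :=
        cntf_erase t he m
      have h3 := hg₁ x
      rw [← hm] at h3
      by_cases hem : (e - t).val ≤ m
      · have hfm : (f - t).val ≤ m := le_of_lt (lt_of_lt_of_le hfe hem)
        simp only [hfm, hem, if_true] at h1 h2
        omega
      · by_cases hfm : (f - t).val ≤ m
        · -- hard case: cntf t b₁ m < cntf t b₂ m
          have hsub : (b₂.filter fun a => ¬ (a - t).val ≤ m)
              ⊆ (b₁.filter fun a => ¬ (a - t).val ≤ m) := by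
            intro a ha
            obtain ⟨ha₂, ham⟩ := Finset.mem_filter.mp ha
            refine Finset.mem_filter.mpr ⟨?_, ham⟩
            by_contra ha₁
            exact ham (le_trans (hfmax a (Finset.mem_sdiff.mpr ⟨ha₂, ha₁⟩)) hfm)
          have hemem : e ∈ b₁.filter fun a => ¬ (a - t).val ≤ m :=
            Finset.mem_filter.mpr ⟨he, hem⟩
          have hssub : (b₂.filter fun a => ¬ (a - t).val ≤ m)
              ⊂ (b₁.filter fun a => ¬ (a - t).val ≤ m) := by
            refine Finset.ssubset_iff_of_subset hsub |>.mpr ⟨e, hemem, ?_⟩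
            intro hc
            exact hne (Finset.mem_filter.mp hc).1
          have hcard := Finset.card_lt_card hssub
          have hp₁ := cntf_add_compl t b₁ m
          have hp₂ := cntf_add_compl t b₂ m
          have h4 := hg₂ x
          rw [← hm] at h4
          simp only [hfm, hem, if_true, if_false] at h1 h2
          omega
        · simp only [hfm, hem, if_false] at h1 h2
          omega
end
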